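/- Let I₁, I₂ be open intervals and g₁, h₁ : I₁ → ℝ, g₂, h₂ : I₂ → ℝ differentiable functions such that for all (t₁, t₂) ∈ I₁ × I₂: g₁(t₁) ≠ g₂(t₂), h₁(t₁) ≠ h₂(t₂), and suppose at a point (t₁, t₂) the products g₁'(t₁)·g₂'(t₂) and h₁'(t₁)·h₂'(t₂) are both nonzero and have opposite signs; set η = sign(g₁'(t₁)·g₂'(t₂)) ∈ {1, −1}. Define, at (t₁, t₂): K = (8·√(|g₁'h₁'g₂'h₂'|)/|(g₁ − g₂)(h₁ − h₂)|)·(g₁'g₂'/(g₁ − g₂)² + h₁'h₂'/(h₁ − h₂)²), κ = (8·√(|g₁'h₁'g₂'h₂'|)/|(g₁ − g₂)(h₁ − h₂)|)·(g₁'g₂'/(g₁ − g₂)² − h₁'h₂'/(h₁ − h₂)²), A = 4·|g₁'g₂'|/(g₁ − g₂)², B = 4·|h₁'h₂'|/(h₁ − h₂)². Then K = η·√(A·B)·(A − B)/2 and κ = η·√(A·B)·(A + B)/2; in particular the sign of κ equals η. -/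

import Mathlib

/-!
Write `a = g₁'g₂'`, `b = h₁'h₂'`, `p = g₁ - g₂`, `q = h₁ - h₂`. Since `a` and `b` have signs `η` and
`-η`, one has `a / p² = η A / 4` and `b / q² = -η B / 4`, while the common prefactor
`8 √|ab| / |pq|` equals `2 √(AB)`. Both curvature formulas then reduce to a ring identity, and
`κ` is `η` times the positive number `√(AB) (A + B) / 2`.
-/

namespace Real

theorem sign_mul_abs (r : ℝ) : sign r * |r| = r := by
  rcases lt_trichotomy r 0 with hr | rfl | hr
  · rw [sign_of_neg hr, abs_of_neg hr]; ring
  · simp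
  · rw [sign_of_pos hr, abs_of_pos hr, one_mul]

theorem sign_sign_mul_of_pos (r : ℝ) {x : ℝ} (hx : 0 < x) : sign (sign r * x) = sign r := by
  rcases sign_apply_eq r with h | h | h <;> rw [h]
  · rw [neg_one_mul, sign_neg, sign_of_pos hx]
  · rw [zero_mul, sign_zero]
  · rw [one_mul, sign_of_pos hx]

end Real

theorem sqrt_abs_div_sq_mul_abs_div_sq (a b p q : ℝ) :
    √(4 * |a| / p ^ 2 * (4 * |b| / q ^ 2)) = 4 * √|a * b| / |p * q| := by
  have h : 4 * |a| / p ^ 2 * (4 * |b| / q ^ 2) = 4 ^ 2 * |a * b| / (p * q) ^ 2 := by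
    rw [abs_mul]; ring
  rw [h, Real.sqrt_div' _ (sq_nonneg _), Real.sqrt_sq_eq_abs, Real.sqrt_mul (by positivity),
    Real.sqrt_sq (by norm_num)]

theorem div_sq_eq_sign_mul (a p : ℝ) : a / p ^ 2 = Real.sign a * (4 * |a| / p ^ 2) / 4 := by
  conv_lhs => rw [← Real.sign_mul_abs a]
  ring

section ThirdType

variable {a b p q : ℝ} (hsb : Real.sign b = -Real.sign a)
include hsb

theorem gaussCurvature_eq :
    8 * √|a * b| / |p * q| * (a / p ^ 2 + b / q ^ 2) =
      Real.sign a * √(4 * |a| / p ^ 2 * (4 * |b| / q ^ 2)) *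
        (4 * |a| / p ^ 2 - 4 * |b| / q ^ 2) / 2 := by
  rw [sqrt_abs_div_sq_mul_abs_div_sq, div_sq_eq_sign_mul a, div_sq_eq_sign_mul b, hsb]
  ring

theorem normalCurvature_eq :
    8 * √|a * b| / |p * q| * (a / p ^ 2 - b / q ^ 2) =
      Real.sign a * √(4 * |a| / p ^ 2 * (4 * |b| / q ^ 2)) *
        (4 * |a| / p ^ 2 + 4 * |b| / q ^ 2) / 2 := by
  rw [sqrt_abs_div_sq_mul_abs_div_sq, div_sq_eq_sign_mul a, div_sq_eq_sign_mul b, hsb]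
  ring

theorem sign_normalCurvature (ha : a ≠ 0) (hb : b ≠ 0) (hp : p ≠ 0) (hq : q ≠ 0) :
    Real.sign (8 * √|a * b| / |p * q| * (a / p ^ 2 - b / q ^ 2)) = Real.sign a := by
  have hab : 0 < |a * b| := abs_pos.mpr (mul_ne_zero ha hb)
  have hpq : 0 < |p * q| := abs_pos.mpr (mul_ne_zero hp hq)
  have := abs_pos.mpr ha
  have := abs_pos.mpr hb
  rw [normalCurvature_eq hsb, mul_assoc, mul_div_assoc]
  exact Real.sign_sign_mul_of_pos a (by positivity)

end ThirdType

theorem stmt_19_general (I₁ I₂ : Set ℝ)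
    (g₁ h₁ g₂ h₂ : ℝ → ℝ)
    (hgg : ∀ t₁ ∈ I₁, ∀ t₂ ∈ I₂, g₁ t₁ ≠ g₂ t₂)
    (hhh : ∀ t₁ ∈ I₁, ∀ t₂ ∈ I₂, h₁ t₁ ≠ h₂ t₂)
    (t₁ t₂ : ℝ) (ht₁ : t₁ ∈ I₁) (ht₂ : t₂ ∈ I₂)
    (hg' : deriv g₁ t₁ * deriv g₂ t₂ ≠ 0)
    (hh' : deriv h₁ t₁ * deriv h₂ t₂ ≠ 0)
    (η : ℝ)
    (hsg : Real.sign (deriv g₁ t₁ * deriv g₂ t₂) = η)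
    (hsh : Real.sign (deriv h₁ t₁ * deriv h₂ t₂) = -η)
    (K κ A B : ℝ)
    (hK : K = 8 * Real.sqrt |deriv g₁ t₁ * deriv h₁ t₁ * deriv g₂ t₂ * deriv h₂ t₂| /
        |(g₁ t₁ - g₂ t₂) * (h₁ t₁ - h₂ t₂)| *
        (deriv g₁ t₁ * deriv g₂ t₂ / (g₁ t₁ - g₂ t₂) ^ 2 +
         deriv h₁ t₁ * deriv h₂ t₂ / (h₁ t₁ - h₂ t₂) ^ 2))
    (hκ : κ = 8 * Real.sqrt |deriv g₁ t₁ * deriv h₁ t₁ * deriv g₂ t₂ * deriv h₂ t₂| /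
        |(g₁ t₁ - g₂ t₂) * (h₁ t₁ - h₂ t₂)| *
        (deriv g₁ t₁ * deriv g₂ t₂ / (g₁ t₁ - g₂ t₂) ^ 2 -
         deriv h₁ t₁ * deriv h₂ t₂ / (h₁ t₁ - h₂ t₂) ^ 2))
    (hA : A = 4 * |deriv g₁ t₁ * deriv g₂ t₂| / (g₁ t₁ - g₂ t₂) ^ 2)
    (hB : B = 4 * |deriv h₁ t₁ * deriv h₂ t₂| / (h₁ t₁ - h₂ t₂) ^ 2) :
    K = η * Real.sqrt (A * B) * (A - B) / 2 ∧
    κ = η * Real.sqrt (A * B) * (A + B) / 2 ∧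
    Real.sign κ = η := by
  have hp := sub_ne_zero.mpr (hgg t₁ ht₁ t₂ ht₂)
  have hq := sub_ne_zero.mpr (hhh t₁ ht₁ t₂ ht₂)
  have hsb := hsh.trans (congrArg Neg.neg hsg.symm)
  have hprod : deriv g₁ t₁ * deriv h₁ t₁ * deriv g₂ t₂ * deriv h₂ t₂ =
      deriv g₁ t₁ * deriv g₂ t₂ * (deriv h₁ t₁ * deriv h₂ t₂) := by ring
  rw [hprod] at hK hκ
  subst hK hκ hA hB hsg
  exact ⟨gaussCurvature_eq hsb, normalCurvature_eq hsb,
    sign_normalCurvature hsb hg' hh' hp hq⟩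

/-- For a minimal Lorentz surface of third type in ℝ⁴₂ (canonical Weierstrass data
g₁,h₁,g₂,h₂ with g₁'g₂' and h₁'h₂' nonzero of opposite signs, η = sign(g₁'g₂')), the
Gauss curvature K and normal curvature κ are expressed through A = √|K_g| and
B = √|K_h| as K = η√(AB)(A−B)/2 and κ = η√(AB)(A+B)/2; in particular sign κ = η. -/
theorem stmt_19 (I₁ I₂ : Set ℝ) (hI₁ : IsOpen I₁) (hI₂ : IsOpen I₂)
    (g₁ h₁ g₂ h₂ : ℝ → ℝ)
    (hg₁ : DifferentiableOn ℝ g₁ I₁) (hh₁ : DifferentiableOn ℝ h₁ I₁)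
    (hg₂ : DifferentiableOn ℝ g₂ I₂) (hh₂ : DifferentiableOn ℝ h₂ I₂)
    (hgg : ∀ t₁ ∈ I₁, ∀ t₂ ∈ I₂, g₁ t₁ ≠ g₂ t₂)
    (hhh : ∀ t₁ ∈ I₁, ∀ t₂ ∈ I₂, h₁ t₁ ≠ h₂ t₂)
    (t₁ t₂ : ℝ) (ht₁ : t₁ ∈ I₁) (ht₂ : t₂ ∈ I₂)
    (hg' : deriv g₁ t₁ * deriv g₂ t₂ ≠ 0)
    (hh' : deriv h₁ t₁ * deriv h₂ t₂ ≠ 0)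
    (η : ℝ) (hη : η = 1 ∨ η = -1)
    (hsg : Real.sign (deriv g₁ t₁ * deriv g₂ t₂) = η)
    (hsh : Real.sign (deriv h₁ t₁ * deriv h₂ t₂) = -η)
    (K κ A B : ℝ)
    (hK : K = 8 * Real.sqrt |deriv g₁ t₁ * deriv h₁ t₁ * deriv g₂ t₂ * deriv h₂ t₂| /
        |(g₁ t₁ - g₂ t₂) * (h₁ t₁ - h₂ t₂)| *
        (deriv g₁ t₁ * deriv g₂ t₂ / (g₁ t₁ - g₂ t₂) ^ 2 +
         deriv h₁ t₁ * deriv h₂ t₂ / (h₁ t₁ - h₂ t₂) ^ 2))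
    (hκ : κ = 8 * Real.sqrt |deriv g₁ t₁ * deriv h₁ t₁ * deriv g₂ t₂ * deriv h₂ t₂| /
        |(g₁ t₁ - g₂ t₂) * (h₁ t₁ - h₂ t₂)| *
        (deriv g₁ t₁ * deriv g₂ t₂ / (g₁ t₁ - g₂ t₂) ^ 2 -
         deriv h₁ t₁ * deriv h₂ t₂ / (h₁ t₁ - h₂ t₂) ^ 2))
    (hA : A = 4 * |deriv g₁ t₁ * deriv g₂ t₂| / (g₁ t₁ - g₂ t₂) ^ 2)
    (hB : B = 4 * |deriv h₁ t₁ * deriv h₂ t₂| / (h₁ t₁ - h₂ t₂) ^ 2) :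
    K = η * Real.sqrt (A * B) * (A - B) / 2 ∧
    κ = η * Real.sqrt (A * B) * (A + B) / 2 ∧
    Real.sign κ = η :=
  stmt_19_general I₁ I₂ g₁ h₁ g₂ h₂ hgg hhh t₁ t₂ ht₁ ht₂ hg' hh' η hsg hsh K κ A B hK hκ hA hB
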